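/- Let G be a group, X ⊆ A^G a non-trivial strongly irreducible subshift with constant K, and H ≤ G a subgroup containing K. Then Aut(X|_H) embeds into Aut(X). -/

import Mathlib

/-- The (left) shift action on configurations: `(shift g x) h = x (g⁻¹ * h)`. -/
def shift {G A : Type*} [Group G] (g : G) (x : G → A) : G → A := fun h => x (g⁻¹ * h)

/-- A subshift: a closed, shift-invariant subset of the full shift `A^G`. -/
def IsSubshift {G A : Type*} [Group G] [TopologicalSpace A] (X : Set (G → A)) : Prop :=
  IsClosed X ∧ ∀ g : G, ∀ x ∈ X, shift g x ∈ X

/-- `X` is strongly irreducible with constant `K`: whenever `S * K ∩ T = ∅`, any two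
patterns of `X` with supports `S` and `T` can be jointly realized in `X`. -/
def StronglyIrreducible {G A : Type*} [Group G] (X : Set (G → A)) (K : Finset G) : Prop :=
  ∀ S T : Finset G, (∀ s ∈ S, ∀ k ∈ K, s * k ∉ T) →
    ∀ x ∈ X, ∀ y ∈ X, ∃ z ∈ X, (∀ g ∈ S, z g = x g) ∧ (∀ g ∈ T, z g = y g)

/-- The shift action on a shift-invariant subset, as a map `X → X`. -/
def shiftX {G A : Type*} [Group G] (X : Set (G → A))
    (hX : ∀ g : G, ∀ x ∈ X, shift g x ∈ X) (g : G) (x : X) : X :=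
  ⟨shift g (x : G → A), hX g x x.2⟩

/-- The automorphism group of a subshift `X`: shift-commuting self-homeomorphisms of `X`,
as a subgroup of the permutation group of `X`. -/
def Aut {G A : Type*} [Group G] [TopologicalSpace A] (X : Set (G → A))
    (hX : ∀ g : G, ∀ x ∈ X, shift g x ∈ X) : Subgroup (Equiv.Perm X) where
  carrier := {φ | Continuous φ ∧ Continuous φ.symm ∧
    ∀ (g : G) (x : X), φ (shiftX X hX g x) = shiftX X hX g (φ x)}
  one_mem' := by
    refine ⟨?_, ?_, fun g x => rfl⟩
    · simpa using continuous_id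
    · exact continuous_id
  mul_mem' := by
    rintro a b ⟨ha1, ha2, ha3⟩ ⟨hb1, hb2, hb3⟩
    refine ⟨?_, ?_, fun g x => ?_⟩
    · have : ⇑(a * b) = ⇑a ∘ ⇑b := rfl
      rw [this]; exact ha1.comp hb1
    · have : ⇑(a * b).symm = ⇑b.symm ∘ ⇑a.symm := rfl
      rw [this]; exact hb2.comp ha2
    · have h1 : (a * b) (shiftX X hX g x) = a (b (shiftX X hX g x)) := rfl
      have h2 : (a * b) x = a (b x) := rfl
      rw [h1, h2, hb3, ha3]
  inv_mem' := by
    rintro a ⟨h1, h2, h3⟩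
    refine ⟨?_, ?_, fun g x => ?_⟩
    · have : ⇑(a⁻¹) = ⇑a.symm := rfl
      rw [this]; exact h2
    · have : ⇑(a⁻¹).symm = ⇑a := rfl
      rw [this]; exact h1
    · apply a.injective
      have hai : ∀ y, a (a⁻¹ y) = y := fun y => a.apply_symm_apply y
      rw [hai, h3, hai]

/-- Restriction of a configuration to a subgroup. -/
def restrictH {G A : Type*} [Group G] (H : Subgroup G) (x : G → A) : H → A :=
  fun h => x (h : G)

/-!
An automorphism `φ` of `X|_H` acts on a configuration `x ∈ X` coset by coset: on `gH` it
replaces the pattern `h ↦ x (g * h)` by its image under `φ`; since `φ` commutes with the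
`H`-shift, the result does not depend on the chosen coset representative, and it commutes
with the `G`-shift. The new configuration lies in `X` because strong irreducibility with a
constant inside `H` glues patterns supported on finitely many distinct cosets, and `X` is
closed. Restricting back to `H` recovers `φ`, so `φ ↦ extension` is injective.
-/

section

variable {G A : Type*} [Group G]

def cosetRestrict (H : Subgroup G) (x : G → A) (g : G) : H → A := fun h => x (g * h)

section CosetRestrict

variable {H : Subgroup G}

lemma cosetRestrict_one (x : G → A) : cosetRestrict H x 1 = restrictH H x := by
  funext h
  simp [cosetRestrict, restrictH]

lemma cosetRestrict_mul (x : G → A) (g : G) (h : H) :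
    cosetRestrict H x (g * h) = shift h⁻¹ (cosetRestrict H x g) := by
  funext h'
  simp [cosetRestrict, shift, mul_assoc]

lemma cosetRestrict_shift (x : G → A) (t g : G) :
    cosetRestrict H (shift t x) g = cosetRestrict H x (t⁻¹ * g) := by
  funext h
  simp [cosetRestrict, shift, mul_assoc]

lemma cosetRestrict_mem {X : Set (G → A)} (hXs : ∀ g : G, ∀ x ∈ X, shift g x ∈ X)
    {x : G → A} (hx : x ∈ X) (g : G) : cosetRestrict H x g ∈ restrictH H '' X :=
  ⟨shift g⁻¹ x, hXs g⁻¹ x hx, by funext h; simp [restrictH, shift, cosetRestrict]⟩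

end CosetRestrict

lemma IsClosed.mem_of_forall_finset_exists_eqOn {ι : Type*} [TopologicalSpace A]
    {X : Set (ι → A)} (hX : IsClosed X) {x : ι → A}
    (h : ∀ S : Finset ι, ∃ z ∈ X, ∀ i ∈ S, z i = x i) : x ∈ X := by
  rw [← hX.closure_eq, mem_closure_iff]
  intro U hU hxU
  obtain ⟨S, u, hu, hSU⟩ := isOpen_pi_iff.mp hU x hxU
  obtain ⟨z, hzX, hz⟩ := h S
  exact ⟨z, hSU fun i hi => (hz i hi).symm ▸ (hu i hi).2, hzX⟩

section Gluing

variable {X : Set (G → A)} {H : Subgroup G} {K : Finset G}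

lemma StronglyIrreducible.exists_mem_glue_coset (hSI : StronglyIrreducible X K)
    (hKH : (K : Set G) ⊆ H) (S : Finset G) (q : G ⧸ H) {x y : G → A} (hx : x ∈ X)
    (hy : y ∈ X) : ∃ z ∈ X, (∀ g ∈ S, QuotientGroup.mk g ≠ q → z g = x g) ∧
      (∀ g ∈ S, QuotientGroup.mk g = q → z g = y g) := by
  classical
  have hdisj : ∀ s ∈ S.filter fun g => QuotientGroup.mk g ≠ q, ∀ k ∈ K,
      s * k ∉ S.filter fun g => QuotientGroup.mk g = q := by
    intro s hs k hk hsk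
    have hcoset : (QuotientGroup.mk (s * k) : G ⧸ H) = QuotientGroup.mk s :=
      QuotientGroup.mk_mul_of_mem s (hKH hk)
    exact (Finset.mem_filter.1 hs).2 (hcoset ▸ (Finset.mem_filter.1 hsk).2)
  obtain ⟨z, hz, hzx, hzy⟩ := hSI _ _ hdisj x hx y hy
  exact ⟨z, hz, fun g hg hgq => hzx g (Finset.mem_filter.2 ⟨hg, hgq⟩),
    fun g hg hgq => hzy g (Finset.mem_filter.2 ⟨hg, hgq⟩)⟩

lemma exists_mem_eqOn_coset_of_cosetRestrict_mem (hXs : ∀ g : G, ∀ x ∈ X, shift g x ∈ X)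
    {x : G → A} (hx : ∀ g, cosetRestrict H x g ∈ restrictH H '' X) (g₀ : G) :
    ∃ y ∈ X, ∀ g, (QuotientGroup.mk g : G ⧸ H) = QuotientGroup.mk g₀ → y g = x g := by
  obtain ⟨w, hw, hwx⟩ := hx g₀
  refine ⟨shift g₀ w, hXs g₀ w hw, fun g hg => ?_⟩
  simpa [restrictH, cosetRestrict, shift] using
    congrFun hwx ⟨g₀⁻¹ * g, QuotientGroup.eq.1 hg.symm⟩

lemma mem_of_forall_cosetRestrict_mem [TopologicalSpace A] (hX : IsSubshift X)
    (hSI : StronglyIrreducible X K) (hKH : (K : Set G) ⊆ H) {x : G → A}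
    (hx : ∀ g, cosetRestrict H x g ∈ restrictH H '' X) : x ∈ X := by
  classical
  refine hX.1.mem_of_forall_finset_exists_eqOn fun S => ?_
  suffices ∀ Q : Finset (G ⧸ H), ∀ S : Finset G, (∀ g ∈ S, QuotientGroup.mk g ∈ Q) →
      ∃ z ∈ X, ∀ g ∈ S, z g = x g from
    this (S.image (↑)) S fun g hg => Finset.mem_image_of_mem _ hg
  intro Q
  induction Q using Finset.induction_on with
  | empty =>
    obtain ⟨w, hw, -⟩ := hx 1
    exact fun S hS => ⟨w, hw, fun g hg => absurd (hS g hg) (Finset.notMem_empty _)⟩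
  | insert q Q _ ih =>
    intro S hS
    obtain ⟨g₀, rfl⟩ := QuotientGroup.mk_surjective q
    obtain ⟨y, hy, hyx⟩ := exists_mem_eqOn_coset_of_cosetRestrict_mem hX.2 hx g₀
    obtain ⟨z', hz', hz'x⟩ :=
      ih (S.filter fun g => QuotientGroup.mk g ≠ QuotientGroup.mk g₀) fun g hg =>
        (Finset.mem_insert.1 (hS g (Finset.mem_filter.1 hg).1)).resolve_left
          (Finset.mem_filter.1 hg).2
    obtain ⟨z, hz, hzx, hzy⟩ := hSI.exists_mem_glue_coset hKH S g₀ hz' hy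
    refine ⟨z, hz, fun g hg => ?_⟩
    by_cases hg₀ : QuotientGroup.mk g = (QuotientGroup.mk g₀ : G ⧸ H)
    · rw [hzy g hg hg₀, hyx g hg₀]
    · rw [hzx g hg hg₀, hz'x g (Finset.mem_filter.2 ⟨hg, hg₀⟩)]

end Gluing

namespace Aut

variable [TopologicalSpace A] {X : Set (G → A)} {H : Subgroup G}

section Extend

variable (hXs : ∀ g : G, ∀ x ∈ X, shift g x ∈ X)
  (hinvH : ∀ h : H, ∀ y ∈ restrictH H '' X, shift h y ∈ restrictH H '' X)

def extend (φ : Aut (restrictH H '' X) hinvH) (x : X) : G → A := fun g =>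
  ((φ : Equiv.Perm (restrictH H '' X))
    ⟨cosetRestrict H x g, cosetRestrict_mem hXs x.2 g⟩ : H → A) 1

lemma extend_apply_of_eq (φ : Aut (restrictH H '' X) hinvH) (x : X) {g : G}
    {y : restrictH H '' X} (hy : (y : H → A) = cosetRestrict H x g) :
    extend hXs hinvH φ x g = ((φ : Equiv.Perm (restrictH H '' X)) y : H → A) 1 := by
  obtain ⟨y, _⟩ := y
  subst hy
  rfl

lemma cosetRestrict_extend (φ : Aut (restrictH H '' X) hinvH) (x : X) (g : G) :
    cosetRestrict H (extend hXs hinvH φ x) g = ((φ : Equiv.Perm (restrictH H '' X))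
      ⟨cosetRestrict H x g, cosetRestrict_mem hXs x.2 g⟩ : H → A) := by
  funext h
  -- moving the representative from `g * h` to `g` is a shift by `h⁻¹`, which `φ` commutes with
  rw [show cosetRestrict H (extend hXs hinvH φ x) g h = extend hXs hinvH φ x (g * h) from rfl,
    extend_apply_of_eq hXs hinvH φ x
      (y := shiftX _ hinvH h⁻¹ ⟨_, cosetRestrict_mem hXs x.2 g⟩) (cosetRestrict_mul _ g h).symm,
    φ.2.2.2 h⁻¹]
  simp [shiftX, shift]

lemma extend_one (x : X) : extend hXs hinvH 1 x = x := by
  funext g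
  simp [extend, cosetRestrict]

lemma extend_extend (φ ψ : Aut (restrictH H '' X) hinvH) (x : X)
    (hψx : extend hXs hinvH ψ x ∈ X) :
    extend hXs hinvH φ ⟨extend hXs hinvH ψ x, hψx⟩ = extend hXs hinvH (φ * ψ) x :=
  funext fun _ => extend_apply_of_eq hXs hinvH φ _ (cosetRestrict_extend hXs hinvH ψ x _).symm

lemma extend_shiftX (φ : Aut (restrictH H '' X) hinvH) (t : G) (x : X) :
    extend hXs hinvH φ (shiftX X hXs t x) = shift t (extend hXs hinvH φ x) :=
  funext fun g => extend_apply_of_eq hXs hinvH φ _ (cosetRestrict_shift x.1 t g).symm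

lemma continuous_extend (φ : Aut (restrictH H '' X) hinvH) :
    Continuous (extend hXs hinvH φ) := by
  have hrestrict (g : G) : Continuous fun x : X => cosetRestrict H (x : G → A) g :=
    continuous_pi fun h : H => (continuous_apply (g * h)).comp continuous_subtype_val
  exact continuous_pi fun g => (continuous_apply 1).comp <| continuous_subtype_val.comp <|
    φ.2.1.comp ((hrestrict g).subtype_mk _)

end Extend

variable (hX : IsSubshift X)
  (hinvH : ∀ h : H, ∀ y ∈ restrictH H '' X, shift h y ∈ restrictH H '' X)
  {K : Finset G}

lemma extend_mem (hSI : StronglyIrreducible X K) (hKH : (K : Set G) ⊆ H)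
    (φ : Aut (restrictH H '' X) hinvH) (x : X) : extend hX.2 hinvH φ x ∈ X :=
  mem_of_forall_cosetRestrict_mem hX hSI hKH fun g => by
    rw [cosetRestrict_extend]
    exact Subtype.property _

variable (hSI : StronglyIrreducible X K) (hKH : (K : Set G) ⊆ H)

def extendPerm (φ : Aut (restrictH H '' X) hinvH) : Equiv.Perm X where
  toFun x := ⟨extend hX.2 hinvH φ x, extend_mem hX hinvH hSI hKH φ x⟩
  invFun x := ⟨extend hX.2 hinvH φ⁻¹ x, extend_mem hX hinvH hSI hKH φ⁻¹ x⟩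
  left_inv x := Subtype.ext <| (extend_extend hX.2 hinvH φ⁻¹ φ x _).trans <| by
    rw [inv_mul_cancel, extend_one]
  right_inv x := Subtype.ext <| (extend_extend hX.2 hinvH φ φ⁻¹ x _).trans <| by
    rw [mul_inv_cancel, extend_one]

lemma extendPerm_mem (φ : Aut (restrictH H '' X) hinvH) :
    extendPerm hX hinvH hSI hKH φ ∈ Aut X hX.2 :=
  ⟨(continuous_extend hX.2 hinvH φ).subtype_mk _,
    (continuous_extend hX.2 hinvH φ⁻¹).subtype_mk _,
    fun t x => Subtype.ext (extend_shiftX hX.2 hinvH φ t x)⟩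

def extendHom : Aut (restrictH H '' X) hinvH →* Aut X hX.2 :=
  MonoidHom.mk' (fun φ => ⟨extendPerm hX hinvH hSI hKH φ, extendPerm_mem hX hinvH hSI hKH φ⟩)
    fun φ ψ => Subtype.ext <| Equiv.ext fun x => Subtype.ext
      (extend_extend hX.2 hinvH φ ψ x _).symm

lemma extendHom_injective :
    Function.Injective (extendHom hX hinvH hSI hKH) := by
  refine (injective_iff_map_eq_one _).2 fun φ hφ => Subtype.ext <| Equiv.ext fun y => ?_
  obtain ⟨x, hx, hxy⟩ := y.2
  have hfix : extend hX.2 hinvH φ ⟨x, hx⟩ = x :=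
    congrArg Subtype.val (Equiv.ext_iff.1 (congrArg Subtype.val hφ) ⟨x, hx⟩)
  have hrestrict : cosetRestrict H x 1 = y := (cosetRestrict_one x).trans hxy
  have h := cosetRestrict_extend hX.2 hinvH φ ⟨x, hx⟩ 1
  rw [hfix, show (⟨_, cosetRestrict_mem hX.2 hx 1⟩ : restrictH H '' X) = y from
    Subtype.ext hrestrict] at h
  exact Subtype.ext (h.symm.trans hrestrict)

end Aut

end

theorem stmt12_general {G A : Type*} [Group G] [TopologicalSpace A]
    (X : Set (G → A)) (hX : IsSubshift X)
    (H : Subgroup G) (KH : Finset H)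
    (hSI : StronglyIrreducible X (KH.map ⟨Subtype.val, Subtype.val_injective⟩))
    (hinvH : ∀ h : H, ∀ y ∈ restrictH H '' X, shift h y ∈ restrictH H '' X) :
    ∃ f : (Aut (restrictH H '' X) hinvH) →* (Aut X hX.2), Function.Injective f := by
  have hKH : ((KH.map ⟨Subtype.val, Subtype.val_injective⟩ : Finset G) : Set G) ⊆ H := by
    simp +contextual [Set.subset_def]
  exact ⟨Aut.extendHom hX hinvH hSI hKH, Aut.extendHom_injective hX hinvH hSI hKH⟩

/-- the automorphism group of the restriction `X|_H` of a non-trivial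
strongly irreducible subshift with constant `K ⊆ H` embeds into `Aut(X)`. -/
theorem stmt12 {G A : Type*} [Group G] [Fintype A] [TopologicalSpace A] [DiscreteTopology A]
    (X : Set (G → A)) (hX : IsSubshift X) (hnt : ∃ x ∈ X, ∃ y ∈ X, x ≠ y)
    (H : Subgroup G) (KH : Finset H)
    (hSI : StronglyIrreducible X (KH.map ⟨Subtype.val, Subtype.val_injective⟩))
    (hinvH : ∀ h : H, ∀ y ∈ restrictH H '' X, shift h y ∈ restrictH H '' X) :
    ∃ f : (Aut (restrictH H '' X) hinvH) →* (Aut X hX.2), Function.Injective f :=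
  stmt12_general X hX H KH hSI hinvH
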